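/- arXiv:1006.3117 — 2 statements merged into one kernel-verified Lean document; each statement's English description precedes it below -/
import Mathlib

section
/- Let T₁ : H₀ ⇢ H₁ and T₂ : H₁ ⇢ H₂ be closed densely-defined Hilbert space operators with range(T₁) ⊆ ker(T₂). If every element of ker(T₂) can be written as f + T₁g with f ∈ ker(T₂) ∩ ker(T₁*), then range(T₁) is closed in H₁. -/
/-! By hypothesis `ker T₂ ≤ ker T₁† ⊔ range T₁`, while `range T₁ ≤ ker T₂ ⊓ (ker T₁†)ᗮ` because
`T₁†` is a formal adjoint of `T₁`. The modular law then gives `range T₁ = ker T₂ ⊓ (ker T₁†)ᗮ`, an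
intersection of two closed subspaces: `ker T₂` is closed as a slice of the closed graph of `T₂`. -/

open scoped InnerProductSpace

namespace LinearPMap

section Kernel

variable {R E F : Type*} [Ring R] [AddCommGroup E] [Module R E] [AddCommGroup F] [Module R F]

def ker (T : E →ₗ.[R] F) : Submodule R E :=
  (LinearMap.ker T.toFun).map T.domain.subtype

theorem mem_ker {T : E →ₗ.[R] F} {x : E} : x ∈ T.ker ↔ ∃ h : x ∈ T.domain, T ⟨x, h⟩ = 0 := by
  simp [ker]

theorem coe_ker_eq_preimage_graph (T : E →ₗ.[R] F) :
    (T.ker : Set E) = (fun x => (x, (0 : F))) ⁻¹' T.graph := by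
  ext x
  simp only [SetLike.mem_coe, mem_ker, Set.mem_preimage, mem_graph_iff]
  constructor
  · rintro ⟨hx, hTx⟩
    exact ⟨⟨x, hx⟩, rfl, hTx⟩
  · rintro ⟨y, rfl, hTy⟩
    exact ⟨y.2, hTy⟩

end Kernel

theorem IsClosed.isClosed_ker {R E F : Type*} [CommRing R] [AddCommGroup E] [Module R E]
    [AddCommGroup F] [Module R F] [TopologicalSpace E] [TopologicalSpace F] {T : E →ₗ.[R] F}
    (hT : T.IsClosed) : _root_.IsClosed (T.ker : Set E) := by
  rw [coe_ker_eq_preimage_graph]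
  exact hT.preimage (continuous_id.prodMk continuous_const)

variable {𝕜 E F : Type*} [RCLike 𝕜] [NormedAddCommGroup E] [InnerProductSpace 𝕜 E]
  [NormedAddCommGroup F] [InnerProductSpace 𝕜 F]

theorem IsFormalAdjoint.range_le_orthogonal_ker {T : E →ₗ.[𝕜] F} {S : F →ₗ.[𝕜] E}
    (h : S.IsFormalAdjoint T) : LinearMap.range T.toFun ≤ S.kerᗮ := by
  rintro _ ⟨x, rfl⟩
  rw [Submodule.mem_orthogonal]
  intro y hy
  obtain ⟨hy, hSy⟩ := mem_ker.mp hy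
  simpa [hSy] using (h ⟨y, hy⟩ x).symm

end LinearPMap

theorem Submodule.eq_inf_orthogonal_of_le_sup {𝕜 E : Type*} [RCLike 𝕜] [NormedAddCommGroup E]
    [InnerProductSpace 𝕜 E] {V K N : Submodule 𝕜 E} (hVK : V ≤ K) (hKNV : K ≤ N ⊔ V)
    (hVN : V ≤ Nᗮ) : V = K ⊓ Nᗮ := by
  refine le_antisymm (le_inf hVK hVN) ?_
  calc K ⊓ Nᗮ ≤ (V ⊔ N) ⊓ Nᗮ := inf_le_inf_right _ (sup_comm N V ▸ hKNV)
    _ = V ⊔ N ⊓ Nᗮ := sup_inf_assoc_of_le N hVN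
    _ = V := by rw [Submodule.inf_orthogonal_eq_bot, sup_bot_eq]

theorem range_closed_of_harmonic_representation_general
    {H₀ H₁ H₂ : Type*}
    [NormedAddCommGroup H₀] [InnerProductSpace ℂ H₀] [CompleteSpace H₀]
    [NormedAddCommGroup H₁] [InnerProductSpace ℂ H₁]
    [NormedAddCommGroup H₂] [InnerProductSpace ℂ H₂]
    (T₁ : H₀ →ₗ.[ℂ] H₁) (T₂ : H₁ →ₗ.[ℂ] H₂)
    (hT₂ : T₂.IsClosed)
    (hd₁ : Dense (T₁.domain : Set H₀))
    (hcomplex : ∀ x : T₁.domain, ∃ h : T₁ x ∈ T₂.domain, T₂ ⟨T₁ x, h⟩ = 0)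
    (hsurj : ∀ u : T₂.domain, T₂ u = 0 →
      ∃ (f : H₁) (g : T₁.domain),
        (∃ hf₂ : f ∈ T₂.domain, T₂ ⟨f, hf₂⟩ = 0) ∧
        (∃ hf₁ : f ∈ T₁.adjoint.domain, T₁.adjoint ⟨f, hf₁⟩ = 0) ∧
        (u : H₁) = f + T₁ g) :
    IsClosed (Set.range fun x : T₁.domain => T₁ x) := by
  have hrange : LinearMap.range T₁.toFun ≤ T₂.ker := by
    rintro _ ⟨x, rfl⟩
    exact LinearPMap.mem_ker.mpr (hcomplex x)
  have hdecomp : T₂.ker ≤ T₁.adjoint.ker ⊔ LinearMap.range T₁.toFun := by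
    intro u hu
    obtain ⟨hu, hTu⟩ := LinearPMap.mem_ker.mp hu
    obtain ⟨f, g, -, hf, rfl⟩ := hsurj ⟨u, hu⟩ hTu
    exact Submodule.add_mem_sup (LinearPMap.mem_ker.mpr hf) (LinearMap.mem_range_self _ g)
  have hrange_eq := Submodule.eq_inf_orthogonal_of_le_sup hrange hdecomp
    (T₁.adjoint_isFormalAdjoint hd₁).range_le_orthogonal_ker
  change IsClosed (LinearMap.range T₁.toFun : Set H₁)
  rw [hrange_eq, Submodule.coe_inf]
  exact (LinearPMap.IsClosed.isClosed_ker hT₂).inter (Submodule.isClosed_orthogonal _)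

/-- If `T₁ : H₀ ⇢ H₁`, `T₂ : H₁ ⇢ H₂` are closed densely-defined operators
with `range T₁ ⊆ ker T₂`, and every element of `ker T₂` can be written as `f + T₁ g` with
`f ∈ ker T₂ ∩ ker T₁*`, then `range T₁` is closed in `H₁`. -/
theorem range_closed_of_harmonic_representation
    {H₀ H₁ H₂ : Type*}
    [NormedAddCommGroup H₀] [InnerProductSpace ℂ H₀] [CompleteSpace H₀]
    [NormedAddCommGroup H₁] [InnerProductSpace ℂ H₁] [CompleteSpace H₁]
    [NormedAddCommGroup H₂] [InnerProductSpace ℂ H₂] [CompleteSpace H₂]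
    (T₁ : H₀ →ₗ.[ℂ] H₁) (T₂ : H₁ →ₗ.[ℂ] H₂)
    (hT₁ : T₁.IsClosed) (hT₂ : T₂.IsClosed)
    (hd₁ : Dense (T₁.domain : Set H₀)) (hd₂ : Dense (T₂.domain : Set H₁))
    (hcomplex : ∀ x : T₁.domain, ∃ h : T₁ x ∈ T₂.domain, T₂ ⟨T₁ x, h⟩ = 0)
    (hsurj : ∀ u : T₂.domain, T₂ u = 0 →
      ∃ (f : H₁) (g : T₁.domain),
        (∃ hf₂ : f ∈ T₂.domain, T₂ ⟨f, hf₂⟩ = 0) ∧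
        (∃ hf₁ : f ∈ T₁.adjoint.domain, T₁.adjoint ⟨f, hf₁⟩ = 0) ∧
        (u : H₁) = f + T₁ g) :
    IsClosed (Set.range fun x : T₁.domain => T₁ x) :=
  range_closed_of_harmonic_representation_general T₁ T₂ hT₂ hd₁ hcomplex hsurj
end

section
/- Let T₁ : H₁ ⇢ K₁ and T₂ : H₂ ⇢ K₂ be closed densely-defined operators on Hilbert spaces. Then the algebraic tensor product operator T₁ ⊗ T₂, defined on Dom(T₁) ⊗ Dom(T₂) ⊆ H₁ ⊗̂ H₂ by (T₁⊗T₂)(x⊗y) = T₁x ⊗ T₂y, is closable as an operator from the Hilbert tensor product H₁ ⊗̂ H₂ to K₁ ⊗̂ K₂. -/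
/-!
For `u ∈ dom T₁†` and `v ∈ dom T₂†`, the continuous functional
`(s, t) ↦ ⟪u ⊗ v, t⟫ - ⟪T₁† u ⊗ T₂† v, s⟫` vanishes on the graph of `T₁ ⊗ T₂`, hence on its
closure; so if `(0, w)` lies in that closure, then `w ⊥ u ⊗ v`. Since `T₁` and `T₂` are closed,
their adjoints are densely defined, and the vectors `u ⊗ v` then span a dense subspace of
`K₁ ⊗̂ K₂`. Hence `w = 0`.
-/

open scoped InnerProductSpace LinearPMap
open Set Function

theorem LinearPMap.dense_adjoint_domain {𝕜 E F : Type*} [RCLike 𝕜]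
    [NormedAddCommGroup E] [InnerProductSpace 𝕜 E] [CompleteSpace E]
    [NormedAddCommGroup F] [InnerProductSpace 𝕜 F] [CompleteSpace F]
    {T : E →ₗ.[𝕜] F} (hT : T.IsClosed) : Dense (T†.domain : Set F) := by
  rw [Submodule.dense_iff_topologicalClosure_eq_top, Submodule.topologicalClosure_eq_top_iff,
    Submodule.eq_bot_iff]
  intro y hy
  let G : Submodule 𝕜 (WithLp 2 (E × F)) :=
    T.graph.comap (WithLp.linearEquiv 2 𝕜 (E × F)).toLinearMap
  have hG : _root_.IsClosed (G : Set (WithLp 2 (E × F))) :=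
    hT.preimage (WithLp.prod_continuous_ofLp ..)
  -- Every `(a, b) ∈ Gᗮ` has `b ∈ dom T†`, so `(0, y) ⊥ Gᗮ`.
  have hmem : WithLp.toLp 2 ((0 : E), y) ∈ Gᗮᗮ := by
    rw [Submodule.mem_orthogonal]
    intro q hq
    have hadj : (WithLp.ofLp q).2 ∈ T†.domain := by
      refine LinearPMap.mem_adjoint_domain_of_exists _ ⟨-(WithLp.ofLp q).1, fun x => ?_⟩
      have hx := Submodule.inner_left_of_mem_orthogonal (u := WithLp.toLp 2 ((x : E), T x))
        (T.mem_graph x) hq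
      rw [WithLp.prod_inner_apply] at hx
      rwa [inner_neg_left, neg_eq_iff_add_eq_zero]
    simpa using hy _ hadj
  rw [Submodule.orthogonal_orthogonal_eq_closure, ← SetLike.mem_coe,
    Submodule.topologicalClosure_coe, hG.closure_eq] at hmem
  exact T.graph_fst_eq_zero_snd hmem rfl

theorem Submodule.dense_span_image2 {R X Y M : Type*} [Semiring R] [TopologicalSpace X]
    [TopologicalSpace Y] [TopologicalSpace M] [AddCommMonoid M] [Module R M] [ContinuousAdd M]
    [ContinuousConstSMul R M] {f : X → Y → M} (hf : Continuous (uncurry f))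
    (hspan : Dense (span R (image2 f univ univ) : Set M)) {s : Set X} {t : Set Y}
    (hs : Dense s) (ht : Dense t) : Dense (span R (image2 f s t) : Set M) := by
  rw [← dense_closure, ← Submodule.topologicalClosure_coe]
  refine hspan.mono (span_le.mpr (forall_mem_image2.mpr fun x _ y _ => ?_))
  rw [SetLike.mem_coe, ← SetLike.mem_coe, Submodule.topologicalClosure_coe]
  exact map_mem_closure₂ hf (hs x) (ht y) fun a ha b hb => subset_span (mem_image2_of_mem ha hb)

section InnerBilinear

variable {𝕜 E₁ E₂ E : Type*} [RCLike 𝕜]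
  [NormedAddCommGroup E₁] [InnerProductSpace 𝕜 E₁] [NormedAddCommGroup E₂] [InnerProductSpace 𝕜 E₂]
  [NormedAddCommGroup E] [InnerProductSpace 𝕜 E] {B : E₁ →ₗ[𝕜] E₂ →ₗ[𝕜] E}

theorem LinearMap.norm_apply_apply_of_inner
    (hB : ∀ x z y w, ⟪B x y, B z w⟫_𝕜 = ⟪x, z⟫_𝕜 * ⟪y, w⟫_𝕜) (x : E₁) (y : E₂) :
    ‖B x y‖ = ‖x‖ * ‖y‖ := by
  have h := hB x x y y
  simp only [inner_self_eq_norm_sq_to_K] at h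
  rw [← sq_eq_sq₀ (norm_nonneg _) (by positivity), mul_pow]
  exact_mod_cast h

theorem LinearMap.continuous_uncurry_of_inner
    (hB : ∀ x z y w, ⟪B x y, B z w⟫_𝕜 = ⟪x, z⟫_𝕜 * ⟪y, w⟫_𝕜) :
    Continuous (uncurry fun x y => B x y) :=
  (B.mkContinuous₂ 1 fun x y => by rw [norm_apply_apply_of_inner hB, one_mul]).continuous₂

end InnerBilinear

theorem inner_snd_eq_inner_fst_of_mem_closure_span {𝕜 E F : Type*} [RCLike 𝕜]
    [NormedAddCommGroup E] [InnerProductSpace 𝕜 E] [NormedAddCommGroup F] [InnerProductSpace 𝕜 F]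
    {S : Set (E × F)} {a : E} {b : F} (hS : ∀ p ∈ S, ⟪b, p.2⟫_𝕜 = ⟪a, p.1⟫_𝕜) {p : E × F}
    (hp : p ∈ closure (Submodule.span 𝕜 S : Set (E × F))) : ⟪b, p.2⟫_𝕜 = ⟪a, p.1⟫_𝕜 := by
  let φ : E × F →L[𝕜] 𝕜 :=
    (innerSL 𝕜 b).comp (.snd 𝕜 E F) - (innerSL 𝕜 a).comp (.fst 𝕜 E F)
  have hker : Submodule.span 𝕜 S ≤ φ.ker :=
    Submodule.span_le.mpr fun q hq => by simp [φ, hS q hq]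
  simpa [φ, sub_eq_zero] using φ.isClosed_ker.closure_subset_iff.mpr hker hp

theorem tensor_product_operator_closable_general
    {H₁ H₂ K₁ K₂ HT KT : Type*}
    [NormedAddCommGroup H₁] [InnerProductSpace ℂ H₁] [CompleteSpace H₁]
    [NormedAddCommGroup H₂] [InnerProductSpace ℂ H₂] [CompleteSpace H₂]
    [NormedAddCommGroup K₁] [InnerProductSpace ℂ K₁] [CompleteSpace K₁]
    [NormedAddCommGroup K₂] [InnerProductSpace ℂ K₂] [CompleteSpace K₂]
    [NormedAddCommGroup HT] [InnerProductSpace ℂ HT]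
    [NormedAddCommGroup KT] [InnerProductSpace ℂ KT]
    (tmulH : H₁ →ₗ[ℂ] H₂ →ₗ[ℂ] HT)
    (htmulH_inner : ∀ x z : H₁, ∀ y w : H₂,
      ⟪tmulH x y, tmulH z w⟫_ℂ = ⟪x, z⟫_ℂ * ⟪y, w⟫_ℂ)
    (tmulK : K₁ →ₗ[ℂ] K₂ →ₗ[ℂ] KT)
    (htmulK_inner : ∀ x z : K₁, ∀ y w : K₂,
      ⟪tmulK x y, tmulK z w⟫_ℂ = ⟪x, z⟫_ℂ * ⟪y, w⟫_ℂ)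
    (htmulK_dense : Dense (Submodule.span ℂ
      {t : KT | ∃ (x : K₁) (y : K₂), t = tmulK x y} : Set KT))
    (T₁ : H₁ →ₗ.[ℂ] K₁) (T₂ : H₂ →ₗ.[ℂ] K₂)
    (hT₁ : T₁.IsClosed) (hT₂ : T₂.IsClosed)
    (hd₁ : Dense (T₁.domain : Set H₁)) (hd₂ : Dense (T₂.domain : Set H₂)) :
    ∀ w : KT,
      ((0 : HT), w) ∈ closure
        (Submodule.span ℂ {p : HT × KT | ∃ (x : T₁.domain) (y : T₂.domain),
          p = (tmulH x y, tmulK (T₁ x) (T₂ y))} : Set (HT × KT)) →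
      w = 0 := by
  intro w hw
  have hperp : ∀ u (hu : u ∈ T₁†.domain) v (hv : v ∈ T₂†.domain), ⟪tmulK u v, w⟫_ℂ = 0 := by
    intro u hu v hv
    have hgraph : ∀ p ∈ {p : HT × KT | ∃ (x : T₁.domain) (y : T₂.domain),
        p = (tmulH x y, tmulK (T₁ x) (T₂ y))},
        ⟪tmulK u v, p.2⟫_ℂ = ⟪tmulH (T₁† ⟨u, hu⟩) (T₂† ⟨v, hv⟩), p.1⟫_ℂ := by
      rintro _ ⟨x, y, rfl⟩
      rw [htmulK_inner, htmulH_inner, LinearPMap.adjoint_isFormalAdjoint hd₁ ⟨u, hu⟩ x,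
        LinearPMap.adjoint_isFormalAdjoint hd₂ ⟨v, hv⟩ y]
    simpa using inner_snd_eq_inner_fst_of_mem_closure_span hgraph hw
  have hdense := Submodule.dense_span_image2 (R := ℂ)
    (LinearMap.continuous_uncurry_of_inner htmulK_inner)
    (by convert htmulK_dense; ext; simp [eq_comm])
    (LinearPMap.dense_adjoint_domain hT₁) (LinearPMap.dense_adjoint_domain hT₂)
  have hortho : Submodule.span ℂ (image2 (fun u v => tmulK u v) T₁†.domain T₂†.domain)
      ≤ LinearMap.ker (innerₛₗ ℂ w) :=
    Submodule.span_le.mpr (forall_mem_image2.mpr fun u hu v hv =>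
      inner_eq_zero_symm.mp (hperp u hu v hv))
  exact hdense.eq_zero_of_inner_left ℂ fun v hv => hortho hv

/-- Let `T₁ : H₁ ⇢ K₁`, `T₂ : H₂ ⇢ K₂` be closed densely-defined Hilbert
space operators.  Let `HT = H₁ ⊗̂ H₂` and `KT = K₁ ⊗̂ K₂` be Hilbert tensor products,
i.e. Hilbert spaces equipped with bilinear maps `tmulH`, `tmulK` with dense span such that
`⟪x ⊗ y, z ⊗ w⟫ = ⟪x,z⟫ ⟪y,w⟫`.  Then the algebraic tensor product operator `T₁ ⊗ T₂`,
defined on `Dom T₁ ⊗ Dom T₂` by `(T₁ ⊗ T₂)(x ⊗ y) = T₁x ⊗ T₂y`, is closable: if `(0, w)`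
lies in the closure of its graph, then `w = 0`. -/
theorem tensor_product_operator_closable
    {H₁ H₂ K₁ K₂ HT KT : Type*}
    [NormedAddCommGroup H₁] [InnerProductSpace ℂ H₁] [CompleteSpace H₁]
    [NormedAddCommGroup H₂] [InnerProductSpace ℂ H₂] [CompleteSpace H₂]
    [NormedAddCommGroup K₁] [InnerProductSpace ℂ K₁] [CompleteSpace K₁]
    [NormedAddCommGroup K₂] [InnerProductSpace ℂ K₂] [CompleteSpace K₂]
    [NormedAddCommGroup HT] [InnerProductSpace ℂ HT] [CompleteSpace HT]
    [NormedAddCommGroup KT] [InnerProductSpace ℂ KT] [CompleteSpace KT]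
    (tmulH : H₁ →ₗ[ℂ] H₂ →ₗ[ℂ] HT)
    (htmulH_inner : ∀ x z : H₁, ∀ y w : H₂,
      ⟪tmulH x y, tmulH z w⟫_ℂ = ⟪x, z⟫_ℂ * ⟪y, w⟫_ℂ)
    (htmulH_dense : Dense (Submodule.span ℂ
      {t : HT | ∃ (x : H₁) (y : H₂), t = tmulH x y} : Set HT))
    (tmulK : K₁ →ₗ[ℂ] K₂ →ₗ[ℂ] KT)
    (htmulK_inner : ∀ x z : K₁, ∀ y w : K₂,
      ⟪tmulK x y, tmulK z w⟫_ℂ = ⟪x, z⟫_ℂ * ⟪y, w⟫_ℂ)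
    (htmulK_dense : Dense (Submodule.span ℂ
      {t : KT | ∃ (x : K₁) (y : K₂), t = tmulK x y} : Set KT))
    (T₁ : H₁ →ₗ.[ℂ] K₁) (T₂ : H₂ →ₗ.[ℂ] K₂)
    (hT₁ : T₁.IsClosed) (hT₂ : T₂.IsClosed)
    (hd₁ : Dense (T₁.domain : Set H₁)) (hd₂ : Dense (T₂.domain : Set H₂)) :
    ∀ w : KT,
      ((0 : HT), w) ∈ closure
        (Submodule.span ℂ {p : HT × KT | ∃ (x : T₁.domain) (y : T₂.domain),
          p = (tmulH x y, tmulK (T₁ x) (T₂ y))} : Set (HT × KT)) →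
      w = 0 :=
  tensor_product_operator_closable_general tmulH htmulH_inner tmulK htmulK_inner htmulK_dense T₁ T₂
    hT₁ hT₂ hd₁ hd₂
end
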